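/- (Distributivity in the convex hull semiring, part of Theorem 1.) For any finite sets A, B, C ⊆ ℝ², E(A + E(B ∪ C)) = E(E(A + B) ∪ E(A + C)), where + denotes Minkowski sum and E(S) denotes the set of extreme points of the convex hull of S. -/

import Mathlib

open Pointwise

/-- `E S` is the set of extreme points of the convex hull of `S ⊆ ℝ²`. -/
noncomputable def E (S : Set (ℝ × ℝ)) : Set (ℝ × ℝ) :=
  (convexHull ℝ S).extremePoints ℝ

lemma E_subset (S : Set (ℝ × ℝ)) : E S ⊆ S := extremePoints_convexHull_subset

lemma convexHull_E (S : Set (ℝ × ℝ)) (hS : S.Finite) :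
    convexHull ℝ (E S) = convexHull ℝ S := by
  have hclosed : IsClosed (convexHull ℝ (E S)) :=
    ((hS.subset (E_subset S)).isCompact_convexHull (𝕜 := ℝ)).isClosed
  have := closure_convexHull_extremePoints (hS.isCompact_convexHull (𝕜 := ℝ)) (convex_convexHull ℝ S)
  rwa [show (convexHull ℝ S).extremePoints ℝ = E S from rfl, hclosed.closure_eq] at this

lemma E_eq_of_hull_eq {S T : Set (ℝ × ℝ)} (h : convexHull ℝ S = convexHull ℝ T) :
    E S = E T := by unfold E; rw [h]

/-- Distributivity in the convex hull semiring, with `A ⊕ B = E(A ∪ B)` and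
`A ⊗ B = E(A + B)` (Minkowski sum): `A ⊗ (B ⊕ C) = (A ⊗ B) ⊕ (A ⊗ C)`. -/
theorem semiring_distrib (A B C : Set (ℝ × ℝ))
    (hA : A.Finite) (hB : B.Finite) (hC : C.Finite) :
    E (A + E (B ∪ C)) = E (E (A + B) ∪ E (A + C)) := by
  apply E_eq_of_hull_eq
  have hAB : (A + B).Finite := hA.add hB
  have hAC : (A + C).Finite := hA.add hC
  calc convexHull ℝ (A + E (B ∪ C))
      = convexHull ℝ A + convexHull ℝ (E (B ∪ C)) := convexHull_add ..
    _ = convexHull ℝ A + convexHull ℝ (B ∪ C) := by rw [convexHull_E _ (hB.union hC)]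
    _ = convexHull ℝ (A + (B ∪ C)) := (convexHull_add ..).symm
    _ = convexHull ℝ ((A + B) ∪ (A + C)) := by rw [Set.add_union]
    _ = convexHull ℝ (convexHull ℝ (A + B) ∪ convexHull ℝ (A + C)) := by
        rw [convexHull_convexHull_union_left, convexHull_convexHull_union_right]
    _ = convexHull ℝ (convexHull ℝ (E (A + B)) ∪ convexHull ℝ (E (A + C))) := by
        rw [convexHull_E _ hAB, convexHull_E _ hAC]
    _ = convexHull ℝ (E (A + B) ∪ E (A + C)) := by
        rw [convexHull_convexHull_union_left, convexHull_convexHull_union_right]
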